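/- arXiv:2107.06444 — 8 statements merged into one kernel-verified Lean document; each statement's English description precedes it below -/
import Mathlib

section
/- Let A be a well-founded poset, H a Hilbert space, and (H_a)_{a∈A} a monotone family of closed subspaces of H. Then (H_a)_{a∈A} is decomposable if and only if it satisfies the intersection property. -/
open Submodule

variable {𝕜 E : Type*} [RCLike 𝕜] [NormedAddCommGroup E] [InnerProductSpace 𝕜 E]
  [CompleteSpace E]

/-- The orthogonal projection of `E` onto the topological closure of `K`,
as a continuous linear map `E →L[𝕜] E`. -/
noncomputable def projC (K : Submodule 𝕜 E) : E →L[𝕜] E :=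
  haveI : CompleteSpace K.topologicalClosure :=
    K.isClosed_topologicalClosure.completeSpace_coe
  K.topologicalClosure.subtypeL.comp (orthogonalProjection K.topologicalClosure)

/-- `π(B)`: the orthogonal projection onto the closed span of the `H b`, `b ∈ B`. -/
noncomputable def piProj {A : Type*} [PartialOrder A] (H : A → Submodule 𝕜 E)
    (B : Set A) : E →L[𝕜] E :=
  projC (⨆ b ∈ B, H b)

/-- A monotone family `(H_a)_{a ∈ A}` of closed subspaces of `E` is decomposable if there is
a family `(S_a)_{a ∈ A⁺}` of pairwise orthogonal closed subspaces whose total closed span is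
`E` and whose partial closed spans over `{b ≤ a}` recover each `H_a`. -/
def Decomposable {A : Type*} [PartialOrder A] (H : A → Submodule 𝕜 E) : Prop :=
  ∃ S : WithTop A → Submodule 𝕜 E,
    (∀ a, IsClosed ((S a : Submodule 𝕜 E) : Set E)) ∧
    (∀ a b, a ≠ b → ∀ u ∈ S a, ∀ v ∈ S b, (inner 𝕜 u v : 𝕜) = 0) ∧
    (⨆ a, S a).topologicalClosure = ⊤ ∧
    (∀ a : A, (⨆ b ∈ {b : A | b ≤ a}, S (b : WithTop A)).topologicalClosure = H a)

/-- The intersection property: `π({c ≤ a} ∩ {c ≤ b}) = π_a ∘ π_b`. -/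
def IntersectionProperty {A : Type*} [PartialOrder A] (H : A → Submodule 𝕜 E) : Prop :=
  ∀ a b : A,
    piProj H {c | c ≤ a ∧ c ≤ b} =
      (piProj H {c | c ≤ a}).comp (piProj H {c | c ≤ b})

/-!
If `(S_a)` is a decomposition, then for every lower set `B ⊆ A` the closed span `H(B)` is the
closed span of the `S_b`, `b ∈ B`; and for any orthogonal family `(S_i)` the projections onto the
closed spans of `(S_i)_{i ∈ I}` and `(S_i)_{i ∈ J}` compose to the projection onto that of
`(S_i)_{i ∈ I ∩ J}`. Taking `I = {c ≤ a}`, `J = {c ≤ b}` gives the intersection property.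

Conversely, take `S_a := H_a ⊖ H({b < a})` and `S_1 := H(A)^⊥`. By well-founded induction the
`S_b` with `b ≤ a` span `H_a`. If `a ≰ b`, `u ∈ S_a` and `v ∈ S_b`, the intersection property gives
`π_a v = π_a π_b v = π({c ≤ a, c ≤ b}) v ∈ H({c < a}) ⊥ u`, while `v - π_a v ⊥ H_a ∋ u`;
hence `u ⊥ v`.
-/

theorem topologicalClosure_biSup_eq_of_isLowerSet {ι R M : Type*} [Preorder ι] [Semiring R]
    [AddCommMonoid M] [TopologicalSpace M] [Module R M] [ContinuousConstSMul R M]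
    [ContinuousAdd M] {H S : ι → Submodule R M}
    (hS : ∀ i, (⨆ j ∈ {j | j ≤ i}, S j).topologicalClosure = H i) {B : Set ι}
    (hB : IsLowerSet B) :
    (⨆ i ∈ B, H i).topologicalClosure = (⨆ i ∈ B, S i).topologicalClosure := by
  have hSH (i : ι) : S i ≤ H i := by
    rw [← hS i]
    exact (le_biSup (s := {j | j ≤ i}) S le_rfl).trans (le_topologicalClosure _)
  apply le_antisymm
  · refine topologicalClosure_minimal _ (iSup₂_le fun i hi => ?_) (isClosed_topologicalClosure _)
    rw [← hS i]
    exact topologicalClosure_mono (iSup₂_le fun j hj => le_biSup (s := B) S (hB hj hi))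
  · exact topologicalClosure_mono (iSup₂_mono fun i _ => hSH i)

instance Submodule.hasOrthogonalProjection_topologicalClosure (K : Submodule 𝕜 E) :
    K.topologicalClosure.HasOrthogonalProjection :=
  have := K.isClosed_topologicalClosure.completeSpace_coe
  .ofCompleteSpace _

section projC

variable {K L : Submodule 𝕜 E} {x y : E}

theorem projC_eq_starProjection (K : Submodule 𝕜 E) :
    projC K = K.topologicalClosure.starProjection := rfl

theorem projC_congr (h : K.topologicalClosure = L.topologicalClosure) : projC K = projC L := by
  simp only [projC_eq_starProjection, h]

theorem projC_apply_mem (K : Submodule 𝕜 E) (x : E) : projC K x ∈ K.topologicalClosure :=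
  starProjection_apply_mem _ x

theorem sub_projC_apply_mem_orthogonal (K : Submodule 𝕜 E) (x : E) : x - projC K x ∈ Kᗮ := by
  rw [← Submodule.orthogonal_closure K]
  exact sub_starProjection_mem_orthogonal x

theorem projC_apply_eq_self_iff : projC K x = x ↔ x ∈ K.topologicalClosure :=
  starProjection_eq_self_iff

theorem projC_apply_eq_zero_iff : projC K x = 0 ↔ x ∈ Kᗮ := by
  rw [← Submodule.orthogonal_closure K]
  exact starProjection_apply_eq_zero_iff _

theorem eq_projC_of_mem_orthogonal (hy : y ∈ K.topologicalClosure)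
    (hxy : x - y ∈ Kᗮ) : projC K x = y := by
  rw [← Submodule.orthogonal_closure K] at hxy
  exact eq_starProjection_of_mem_orthogonal hy hxy

end projC

section OrthogonalFamily

variable {ι : Type*} {S : ι → Submodule 𝕜 E}

theorem projC_biSup_apply_mem_of_mem (hS : Pairwise fun i j => S i ⟂ S j) (I : Set ι)
    {J : Set ι} {x : E} (hx : x ∈ (⨆ j ∈ J, S j).topologicalClosure) :
    projC (⨆ i ∈ I, S i) x ∈ (⨆ i ∈ I ∩ J, S i).topologicalClosure := by
  let T := (⨆ i ∈ I ∩ J, S i).topologicalClosure.comap (projC (⨆ i ∈ I, S i)).toLinearMap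
  have hT : IsClosed (T : Set E) :=
    (isClosed_topologicalClosure _).preimage (projC _).continuous
  refine topologicalClosure_minimal _ (iSup₂_le fun j hj v hv => ?_) hT hx
  change projC (⨆ i ∈ I, S i) v ∈ (⨆ i ∈ I ∩ J, S i).topologicalClosure
  by_cases hjI : j ∈ I
  · rw [projC_apply_eq_self_iff.2 (le_topologicalClosure _ (le_biSup (s := I) S hjI hv))]
    exact le_topologicalClosure _ (le_biSup (s := I ∩ J) S ⟨hjI, hj⟩ hv)
  · have hortho : S j ⟂ ⨆ i ∈ I, S i :=
      isOrtho_iSup_right.2 fun i => isOrtho_iSup_right.2 fun hi => hS fun h => hjI (h ▸ hi)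
    rw [projC_apply_eq_zero_iff.2 (hortho.le hv)]
    exact zero_mem _

theorem projC_biSup_comp_projC_biSup (hS : Pairwise fun i j => S i ⟂ S j) (I J : Set ι) :
    projC (⨆ i ∈ I, S i) ∘L projC (⨆ j ∈ J, S j) = projC (⨆ i ∈ I ∩ J, S i) := by
  ext x
  refine (eq_projC_of_mem_orthogonal
    (projC_biSup_apply_mem_of_mem hS I (projC_apply_mem _ x)) ?_).symm
  have hI : ⨆ i ∈ I ∩ J, S i ≤ ⨆ i ∈ I, S i := biSup_mono fun _ hi => hi.1
  have hJ : ⨆ i ∈ I ∩ J, S i ≤ ⨆ j ∈ J, S j := biSup_mono fun _ hi => hi.2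
  rw [← sub_add_sub_cancel x (projC (⨆ j ∈ J, S j) x)]
  exact add_mem (orthogonal_le hJ (sub_projC_apply_mem_orthogonal _ _))
    (orthogonal_le hI (sub_projC_apply_mem_orthogonal _ _))

end OrthogonalFamily

section Poset

variable {A : Type*} [PartialOrder A] {H : A → Submodule 𝕜 E}

theorem Decomposable.intersectionProperty (h : Decomposable H) : IntersectionProperty H := by
  obtain ⟨S, -, horth, -, hspan⟩ := h
  have hS : Pairwise fun a b : A => S a ⟂ S b := fun a b hab =>
    isOrtho_iff_inner_eq.2 (horth _ _ (WithTop.coe_injective.ne hab))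
  have hpi {B : Set A} (hB : IsLowerSet B) : piProj H B = projC (⨆ c ∈ B, S c) :=
    projC_congr (topologicalClosure_biSup_eq_of_isLowerSet hspan hB)
  intro a b
  rw [hpi (B := {c | c ≤ a ∧ c ≤ b}) ((isLowerSet_Iic a).inter (isLowerSet_Iic b)),
    hpi (B := {c | c ≤ a}) (isLowerSet_Iic a), hpi (B := {c | c ≤ b}) (isLowerSet_Iic b)]
  exact (projC_biSup_comp_projC_biSup hS _ _).symm

omit [CompleteSpace E] in
theorem topologicalClosure_biSup_Iic (hclosed : ∀ a, IsClosed (H a : Set E)) (hmono : Monotone H)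
    (a : A) : (⨆ c ∈ {c | c ≤ a}, H c).topologicalClosure = H a :=
  le_antisymm (topologicalClosure_minimal _ (iSup₂_le fun _ hc => hmono hc) (hclosed a))
    ((le_biSup (s := {c | c ≤ a}) H le_rfl).trans (le_topologicalClosure _))

theorem piProj_Iic_apply_of_mem (hclosed : ∀ a, IsClosed (H a : Set E)) (hmono : Monotone H)
    {a : A} {v : E} (hv : v ∈ H a) : piProj H {c | c ≤ a} v = v :=
  projC_apply_eq_self_iff.2 (by rwa [topologicalClosure_biSup_Iic hclosed hmono])

variable (H) in
omit [CompleteSpace E] in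
def orthogonalIncrement : WithTop A → Submodule 𝕜 E
  | ⊤ => (⨆ a, H a)ᗮ
  | (a : A) => H a ⊓ (⨆ b ∈ {b | b < a}, H b)ᗮ

omit [CompleteSpace E] in
theorem orthogonalIncrement_coe_le (a : A) : orthogonalIncrement H a ≤ H a := inf_le_left

omit [CompleteSpace E] in
theorem isClosed_orthogonalIncrement (hclosed : ∀ a, IsClosed (H a : Set E)) :
    ∀ t, IsClosed (orthogonalIncrement H t : Set E)
  | ⊤ => isClosed_orthogonal _
  | (a : A) => (hclosed a).inter (isClosed_orthogonal _)

omit [CompleteSpace E] in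
theorem orthogonalIncrement_isOrtho_of_lt {a b : A} (hab : a < b) :
    orthogonalIncrement H a ⟂ orthogonalIncrement H b :=
  (isOrtho_orthogonal_right (⨆ c ∈ {c | c < b}, H c)).mono
    ((orthogonalIncrement_coe_le a).trans (le_biSup (s := {c | c < b}) H hab)) inf_le_right

theorem orthogonalIncrement_isOrtho_of_not_le (hclosed : ∀ a, IsClosed (H a : Set E))
    (hmono : Monotone H) (hIP : IntersectionProperty H) {a b : A} (hab : ¬a ≤ b) :
    orthogonalIncrement H a ⟂ orthogonalIncrement H b := by
  rw [isOrtho_iff_inner_eq]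
  intro u hu v hv
  have hw : piProj H {c | c ≤ a ∧ c ≤ b} v = piProj H {c | c ≤ a} v := by
    rw [hIP, ContinuousLinearMap.comp_apply,
      piProj_Iic_apply_of_mem hclosed hmono (orthogonalIncrement_coe_le b hv)]
  have hlt : ⨆ c ∈ {c | c ≤ a ∧ c ≤ b}, H c ≤ ⨆ c ∈ {c | c < a}, H c :=
    biSup_mono fun c hc => lt_of_le_of_ne hc.1 fun h => hab (h ▸ hc.2)
  have h₁ : inner 𝕜 u (piProj H {c | c ≤ a ∧ c ≤ b} v) = 0 :=
    inner_left_of_mem_orthogonal (topologicalClosure_mono hlt (projC_apply_mem _ v))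
      (by rw [orthogonal_closure]; exact hu.2)
  have h₂ : inner 𝕜 u (v - piProj H {c | c ≤ a} v) = 0 :=
    inner_right_of_mem_orthogonal (le_biSup (s := {c | c ≤ a}) H le_rfl hu.1)
      (sub_projC_apply_mem_orthogonal _ v)
  calc inner 𝕜 u v
      = inner 𝕜 u (piProj H {c | c ≤ a ∧ c ≤ b} v) + inner 𝕜 u (v - piProj H {c | c ≤ a} v) := by
        rw [hw, ← inner_add_right, add_sub_cancel]
    _ = 0 := by rw [h₁, h₂, add_zero]

theorem pairwise_isOrtho_orthogonalIncrement (hclosed : ∀ a, IsClosed (H a : Set E))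
    (hmono : Monotone H) (hIP : IntersectionProperty H) :
    Pairwise fun s t => orthogonalIncrement H s ⟂ orthogonalIncrement H t := by
  have top_isOrtho (a : A) : orthogonalIncrement H ⊤ ⟂ orthogonalIncrement H a :=
    (isOrtho_orthogonal_left _).mono_right ((orthogonalIncrement_coe_le a).trans (le_iSup H a))
  rintro (_ | a) (_ | b) hne
  · exact (hne rfl).elim
  · exact top_isOrtho b
  · exact (top_isOrtho a).symm
  · by_cases hab : a ≤ b
    · exact orthogonalIncrement_isOrtho_of_lt (lt_of_le_of_ne hab fun h => hne (h ▸ rfl))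
    · exact orthogonalIncrement_isOrtho_of_not_le hclosed hmono hIP hab

theorem topologicalClosure_biSup_orthogonalIncrement (hwf : WellFounded ((· < ·) : A → A → Prop))
    (hclosed : ∀ a, IsClosed (H a : Set E)) (hmono : Monotone H) (a : A) :
    (⨆ b ∈ {b | b ≤ a}, orthogonalIncrement H b).topologicalClosure = H a := by
  induction a using hwf.induction with
  | _ a ih =>
  set K := (⨆ b ∈ {b | b ≤ a}, orthogonalIncrement H b).topologicalClosure
  set L := (⨆ b ∈ {b | b < a}, H b).topologicalClosure
  have hLa : L ≤ H a :=
    topologicalClosure_minimal _ (iSup₂_le fun _ hb => hmono hb.le) (hclosed a)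
  have hle {c : A} (hc : c ≤ a) : orthogonalIncrement H c ≤ K :=
    (le_biSup (s := {b | b ≤ a}) (fun b : A => orthogonalIncrement H b) hc).trans
      (le_topologicalClosure _)
  have hLK : L ≤ K := by
    refine topologicalClosure_minimal _ (iSup₂_le fun b hb => ?_) (isClosed_topologicalClosure _)
    rw [← ih b hb]
    exact topologicalClosure_minimal _ (iSup₂_le fun c hc => hle (le_trans hc hb.le))
      (isClosed_topologicalClosure _)
  refine le_antisymm (topologicalClosure_minimal _ (iSup₂_le fun b hb =>
    (orthogonalIncrement_coe_le b).trans (hmono hb)) (hclosed a)) ?_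
  calc H a = L ⊔ Lᗮ ⊓ H a := (sup_orthogonal_inf_of_hasOrthogonalProjection hLa).symm
    _ ≤ K := sup_le hLK (by rw [orthogonal_closure, inf_comm]; exact hle le_rfl)

theorem topologicalClosure_iSup_orthogonalIncrement
    (hwf : WellFounded ((· < ·) : A → A → Prop)) (hclosed : ∀ a, IsClosed (H a : Set E))
    (hmono : Monotone H) : (⨆ t, orthogonalIncrement H t).topologicalClosure = ⊤ := by
  set L := (⨆ a, H a).topologicalClosure
  rw [eq_top_iff, ← sup_orthogonal_of_hasOrthogonalProjection (K := L), orthogonal_closure]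
  refine sup_le (topologicalClosure_minimal _ (iSup_le fun a => ?_) (isClosed_topologicalClosure _))
    ((le_iSup (orthogonalIncrement H) ⊤).trans (le_topologicalClosure _))
  rw [← topologicalClosure_biSup_orthogonalIncrement hwf hclosed hmono a]
  exact topologicalClosure_mono (iSup₂_le fun b _ => le_iSup (orthogonalIncrement H) b)

theorem IntersectionProperty.decomposable (hwf : WellFounded ((· < ·) : A → A → Prop))
    (hclosed : ∀ a, IsClosed (H a : Set E)) (hmono : Monotone H) (hIP : IntersectionProperty H) :
    Decomposable H :=
  ⟨orthogonalIncrement H, isClosed_orthogonalIncrement hclosed,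
    fun _ _ hst =>
      isOrtho_iff_inner_eq.1 (pairwise_isOrtho_orthogonalIncrement hclosed hmono hIP hst),
    topologicalClosure_iSup_orthogonalIncrement hwf hclosed hmono,
    topologicalClosure_biSup_orthogonalIncrement hwf hclosed hmono⟩

end Poset

/-- For a well-founded poset `A` and a monotone family of closed subspaces
`(H_a)_{a ∈ A}` of a Hilbert space `E`, the family is decomposable if and only if it
satisfies the intersection property. -/
theorem decomposable_iff_intersectionProperty
    {A : Type*} [PartialOrder A]
    (hwf : WellFounded ((· < ·) : A → A → Prop))
    (H : A → Submodule 𝕜 E)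
    (hclosed : ∀ a, IsClosed ((H a : Submodule 𝕜 E) : Set E))
    (hmono : Monotone H) :
    Decomposable H ↔ IntersectionProperty H :=
  ⟨Decomposable.intersectionProperty, IntersectionProperty.decomposable hwf hclosed hmono⟩
end

section
/- Let A be any poset, H a Hilbert space, and (H_a)_{a∈A} a decomposable monotone family of closed subspaces of H with decomposition (S'_a)_{a∈A⁺}. Then for every a ∈ A⁺, S'_a = H_a ∩ ⋂_{b∈A⁺, b<a} H_b^⊥. In particular a decomposable family has a unique decomposition. -/
/-!
If `v` lies in the closed span `K` of some pieces of an orthogonal family and is orthogonal to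
every one of them except `S_a`, then `v ∈ S_a`: writing `v = p + q` with `p ∈ S_a` and
`q ⊥ S_a`, the remainder `q` lies in `K` and is orthogonal to every piece spanning `K`, so
`q ∈ K ⊓ Kᗮ = 0`. For the pieces `S'_b`, `b ≤ a`, spanning `H_a` this gives
`H_a ⊓ ⋂_{b < a} H_bᗮ ≤ S'_a`, the reverse inclusion being orthogonality of the family.
The density of the span of all pieces says exactly that `H_⊤ = H` is spanned by the pieces
below `⊤`, so the case `a = ⊤` is no different.
-/

open Submodule

variable {𝕜 E : Type*} [RCLike 𝕜] [NormedAddCommGroup E] [InnerProductSpace 𝕜 E]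
  [CompleteSpace E]

/-- The extension of the family `(H_a)_{a ∈ A}` to `A⁺ = WithTop A`, sending the added
greatest element `⊤` to the whole space. -/
def extFam {A : Type*} [PartialOrder A] (H : A → Submodule 𝕜 E) :
    WithTop A → Submodule 𝕜 E :=
  fun x => WithTop.recTopCoe ⊤ H x

section

variable {F ι : Type*} [NormedAddCommGroup F] [InnerProductSpace 𝕜 F]

namespace Submodule

section OrthogonalFamily

variable {S : ι → Submodule 𝕜 F}

theorem mem_orthogonal_closure_biSup_iff {P : ι → Prop} {v : F} :
    v ∈ (⨆ i ∈ {i | P i}, S i).topologicalClosureᗮ ↔ ∀ i, P i → v ∈ (S i)ᗮ := by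
  rw [orthogonal_closure, iSup_subtype', ← iInf_orthogonal, mem_iInf, Subtype.forall]
  rfl

theorem le_orthogonal_closure_biSup (hS : Pairwise fun i j => S i ⟂ S j) {P : ι → Prop}
    {j : ι} (hj : ¬P j) : S j ≤ (⨆ i ∈ {i | P i}, S i).topologicalClosureᗮ :=
  fun _ hu => mem_orthogonal_closure_biSup_iff.2 fun i hi =>
    (hS fun hji : j = i => hj (hji ▸ hi)).le hu

theorem mem_of_mem_closure_biSup (hS : Pairwise fun i j => S i ⟂ S j) {P : ι → Prop}
    {a : ι} [(S a).HasOrthogonalProjection] (ha : P a) {v : F}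
    (hv : v ∈ (⨆ i ∈ {i | P i}, S i).topologicalClosure)
    (hvS : ∀ i, P i → i ≠ a → v ∈ (S i)ᗮ) : v ∈ S a := by
  set K := (⨆ i ∈ {i | P i}, S i).topologicalClosure
  obtain ⟨p, hp, q, hq, rfl⟩ := (S a).exists_add_mem_mem_orthogonal v
  have hpK : p ∈ K :=
    le_topologicalClosure _ <| le_biSup (fun i => S i) (show a ∈ {i | P i} from ha) hp
  have hqK : q ∈ K := by simpa using K.sub_mem hv hpK
  have hqKperp : q ∈ Kᗮ := by
    refine mem_orthogonal_closure_biSup_iff.2 fun i hi => ?_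
    obtain rfl | hia := eq_or_ne i a
    · exact hq
    · simpa using (S i)ᗮ.sub_mem (hvS i hi hia) ((hS hia).symm.le hp)
  have hq0 : q = 0 := by
    simpa [K.inf_orthogonal_eq_bot] using (mem_inf.2 ⟨hqK, hqKperp⟩ : q ∈ K ⊓ Kᗮ)
  simpa [hq0] using hp

end OrthogonalFamily

section PartialOrder

variable [PartialOrder ι]

def closedSpanIic (S : ι → Submodule 𝕜 F) (a : ι) : Submodule 𝕜 F :=
  (⨆ b ∈ {b | b ≤ a}, S b).topologicalClosure

theorem le_closedSpanIic {S : ι → Submodule 𝕜 F} {a b : ι} (hab : a ≤ b) :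
    S a ≤ closedSpanIic S b :=
  (le_biSup (fun i => S i) (show a ∈ {i | i ≤ b} from hab)).trans (le_topologicalClosure _)

theorem eq_closedSpanIic_inf_iInf_orthogonal {S : ι → Submodule 𝕜 F}
    (hS : Pairwise fun i j => S i ⟂ S j) (a : ι) [(S a).HasOrthogonalProjection] :
    S a = closedSpanIic S a ⊓ ⨅ b ∈ {b | b < a}, (closedSpanIic S b)ᗮ := by
  refine le_antisymm (le_inf (le_closedSpanIic le_rfl) (le_iInf₂ fun b hb => ?_)) ?_
  · exact le_orthogonal_closure_biSup hS (not_le_of_gt hb)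
  · intro v hv
    simp only [mem_inf, mem_iInf, Set.mem_ofPred_eq] at hv
    refine mem_of_mem_closure_biSup (P := (· ≤ a)) hS le_rfl hv.1 fun i hia hne => ?_
    exact orthogonal_le (le_closedSpanIic le_rfl) (hv.2 i (lt_of_le_of_ne hia hne))

end PartialOrder

end Submodule

theorem extFam_eq_closedSpanIic {A : Type*} [PartialOrder A] {H : A → Submodule 𝕜 F}
    {S' : WithTop A → Submodule 𝕜 F} (hS'top : (⨆ a, S' a).topologicalClosure = ⊤)
    (hS'dec : ∀ a : A,
      (⨆ b ∈ {b : A | b ≤ a}, S' (b : WithTop A)).topologicalClosure = H a) :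
    extFam H = closedSpanIic S' := by
  funext a
  cases a with
  | top => simpa [closedSpanIic, extFam, ← Set.Iic_def] using hS'top.symm
  | coe a =>
    rw [extFam, WithTop.recTopCoe_coe, ← hS'dec a, closedSpanIic]
    congr 1
    exact (iSup_image (f := WithTop.some) (t := Set.Iic a) (g := S')).symm.trans
      (by rw [WithTop.image_coe_Iic]; rfl)

end

theorem decomposition_unique_general
    {A : Type*} [PartialOrder A]
    (H : A → Submodule 𝕜 E)
    (S' : WithTop A → Submodule 𝕜 E)
    (hS'closed : ∀ a, IsClosed ((S' a : Submodule 𝕜 E) : Set E))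
    (hS'orth : ∀ a b, a ≠ b → ∀ u ∈ S' a, ∀ v ∈ S' b, (inner 𝕜 u v : 𝕜) = 0)
    (hS'top : (⨆ a, S' a).topologicalClosure = ⊤)
    (hS'dec : ∀ a : A,
      (⨆ b ∈ {b : A | b ≤ a}, S' (b : WithTop A)).topologicalClosure = H a) :
    ∀ a : WithTop A,
      S' a = extFam H a ⊓ ⨅ b ∈ {b : WithTop A | b < a}, (extFam H b)ᗮ := by
  have hS' : Pairwise fun a b => S' a ⟂ S' b := fun a b hab =>
    isOrtho_iff_inner_eq.2 (hS'orth a b hab)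
  rw [extFam_eq_closedSpanIic hS'top hS'dec]
  intro a
  have : CompleteSpace (S' a) := (hS'closed a).completeSpace_coe
  exact eq_closedSpanIic_inf_iInf_orthogonal hS' a

/-- If `(S'_a)_{a ∈ A⁺}` is a decomposition of the monotone family of
closed subspaces `(H_a)_{a ∈ A}`, then necessarily
`S'_a = H_a ∩ ⋂_{b ∈ A⁺, b < a} H_b^⊥` for every `a ∈ A⁺`; in particular the
decomposition is unique. -/
theorem decomposition_unique
    {A : Type*} [PartialOrder A]
    (H : A → Submodule 𝕜 E)
    (hclosed : ∀ a, IsClosed ((H a : Submodule 𝕜 E) : Set E))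
    (hmono : Monotone H)
    (S' : WithTop A → Submodule 𝕜 E)
    (hS'closed : ∀ a, IsClosed ((S' a : Submodule 𝕜 E) : Set E))
    (hS'orth : ∀ a b, a ≠ b → ∀ u ∈ S' a, ∀ v ∈ S' b, (inner 𝕜 u v : 𝕜) = 0)
    (hS'top : (⨆ a, S' a).topologicalClosure = ⊤)
    (hS'dec : ∀ a : A,
      (⨆ b ∈ {b : A | b ≤ a}, S' (b : WithTop A)).topologicalClosure = H a) :
    ∀ a : WithTop A,
      S' a = extFam H a ⊓ ⨅ b ∈ {b : WithTop A | b < a}, (extFam H b)ᗮ :=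
  decomposition_unique_general H S' hS'closed hS'orth hS'top hS'dec
end

section
/- Let I be a finite set and (E_i)_{i∈I} a family of finite sets; equip ℝ^{E} with the inner product ⟨f, g⟩ = Σ_{x∈E} f(x)g(x), where E = Π_{i∈I} E_i. Then there exists a family (S_a)_{a⊆I} of pairwise orthogonal subspaces of ℝ^E such that ℝ^E = ⊕_{a⊆I} S_a and, for every lower set 𝒜 of subsets of I (i.e. b ⊆ a ∈ 𝒜 implies b ∈ 𝒜), the hierarchical model subspace H_𝒜 := Σ_{a∈𝒜} V_a satisfies H_𝒜 = ⊕_{a∈𝒜} S_a. -/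
/-!
Take `S_a := V_a ⊓ (Σ_{b ⊊ a} V_b)ᗮ`. The orthogonal projection onto `V_a` averages out the
coordinates outside `a`, so it maps `V_b` into `V_{a ∩ b}`; hence `S_a ⟂ V_b` as soon as
`a ⊄ b`, and the `S_a` are pairwise orthogonal. On the other hand
`V_a = Σ_{b ⊊ a} V_b ⊕ S_a`, so by well-founded induction on `a` we get
`V_a = Σ_{b ⊆ a} S_b`, which gives `H_𝒜 = Σ_{a ∈ 𝒜} S_a` for every lower set `𝒜`, and
`ℝ^E = V_I = Σ_a S_a`.
-/

open Submodule

variable {I : Type*} [Fintype I] [DecidableEq I] {Ei : I → Type*} [∀ i, Fintype (Ei i)]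

/-- The factor subspace `V_a` of functions on `E = Π i, E_i` (with the standard inner
product `⟨f, g⟩ = Σ_x f x * g x`, i.e. in `EuclideanSpace ℝ (Π i, E_i)`) which depend
only on the coordinates in `a`. -/
def factorSub (a : Set I) : Submodule ℝ (EuclideanSpace ℝ (∀ i, Ei i)) where
  carrier := {f | ∀ x y : (∀ i, Ei i), (∀ i ∈ a, x i = y i) → f x = f y}
  add_mem' := by
    intro f g hf hg x y h
    simp only [PiLp.add_apply, hf x y h, hg x y h]
  zero_mem' := by intro x y h; rfl
  smul_mem' := by
    intro c f hf x y h
    simp only [PiLp.smul_apply, hf x y h]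

lemma Set.piecewise_piecewise_swap {ι : Type*} {α : ι → Type*} (s : Set ι)
    [∀ i, Decidable (i ∈ s)] (x y : ∀ i, α i) :
    s.piecewise (s.piecewise x y) (s.piecewise y x) = x := by
  funext i
  by_cases hi : i ∈ s <;> simp [hi]

lemma Finset.sum_sum_piecewise_comm {ι : Type*} {α : ι → Type*} [Fintype (∀ i, α i)]
    {M : Type*} [AddCommMonoid M] (s : Set ι) [∀ i, Decidable (i ∈ s)]
    (F : (∀ i, α i) → (∀ i, α i) → M) :
    ∑ x, ∑ y, F (s.piecewise x y) x = ∑ x, ∑ y, F x (s.piecewise x y) := by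
  have hσ : Function.Involutive fun p : (∀ i, α i) × (∀ i, α i) =>
      (s.piecewise p.1 p.2, s.piecewise p.2 p.1) := fun p => by
    simp only [Set.piecewise_piecewise_swap]
  simp only [← Fintype.sum_prod_type']
  exact Fintype.sum_equiv hσ.toPerm _ _ fun p => by simp [Set.piecewise_piecewise_swap]

omit [Fintype I] [DecidableEq I] [∀ i, Fintype (Ei i)] in
lemma factorSub_mono : Monotone (factorSub (Ei := Ei)) :=
  fun _ _ h _ hf x y hxy => hf x y fun i hi => hxy i (h hi)

omit [Fintype I] [DecidableEq I] [∀ i, Fintype (Ei i)] in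
lemma factorSub_univ : factorSub (Ei := Ei) Set.univ = ⊤ :=
  eq_top_iff.2 fun f _ x y hxy => by rw [funext fun i => hxy i trivial]

open Classical in
/-- The orthogonal projection onto `factorSub a`. Summing over all `y : E` counts every
completion of `x` off `a` equally often, hence the normalisation by `|E|`. -/
noncomputable def factorAvg (a : Set I) :
    EuclideanSpace ℝ (∀ i, Ei i) →ₗ[ℝ] EuclideanSpace ℝ (∀ i, Ei i) where
  toFun f := WithLp.toLp 2 fun x =>
    (Fintype.card (∀ i, Ei i) : ℝ)⁻¹ * ∑ y, f (a.piecewise x y)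
  map_add' f g := by ext x; simp [Finset.sum_add_distrib, mul_add]
  map_smul' c f := by ext x; simp [Finset.mul_sum, mul_left_comm]

open Classical in
lemma factorAvg_apply (a : Set I) (f : EuclideanSpace ℝ (∀ i, Ei i)) (x : ∀ i, Ei i) :
    factorAvg a f x = (Fintype.card (∀ i, Ei i) : ℝ)⁻¹ * ∑ y, f (a.piecewise x y) :=
  rfl

lemma factorAvg_eq_self {a : Set I} {f : EuclideanSpace ℝ (∀ i, Ei i)}
    (hf : f ∈ factorSub a) : factorAvg a f = f := by
  classical
  ext x
  have hconst : ∀ y, f (a.piecewise x y) = f x := fun y =>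
    hf _ _ fun i hi => Set.piecewise_eq_of_mem _ _ _ hi
  have hcard : (Fintype.card (∀ i, Ei i) : ℝ) ≠ 0 := by
    have : Nonempty (∀ i, Ei i) := ⟨x⟩
    positivity
  rw [factorAvg_apply, Finset.sum_congr rfl fun y _ => hconst y, Finset.sum_const,
    Finset.card_univ, nsmul_eq_mul, inv_mul_cancel_left₀ hcard]

lemma factorAvg_mem_factorSub_inter (a : Set I) {b : Set I}
    {f : EuclideanSpace ℝ (∀ i, Ei i)} (hf : f ∈ factorSub b) :
    factorAvg a f ∈ factorSub (a ∩ b) := by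
  classical
  intro x x' hxx'
  rw [factorAvg_apply, factorAvg_apply]
  congr 1
  refine Finset.sum_congr rfl fun y _ => hf _ _ fun i hib => ?_
  by_cases hia : i ∈ a
  · simpa [Set.piecewise_eq_of_mem _ _ _ hia] using hxx' i ⟨hia, hib⟩
  · simp [Set.piecewise_eq_of_notMem _ _ _ hia]

lemma isSymmetric_factorAvg (a : Set I) : (factorAvg (Ei := Ei) a).IsSymmetric := by
  classical
  intro f g
  simp only [PiLp.inner_apply, RCLike.inner_apply, conj_trivial, factorAvg_apply,
    Finset.mul_sum, Finset.sum_mul]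
  convert Finset.sum_sum_piecewise_comm a
    fun x y => (Fintype.card (∀ i, Ei i) : ℝ)⁻¹ * f x * g y using 3 <;> ring

lemma isOrtho_factorSub_inf_orthogonal (a b : Set I) :
    factorSub (Ei := Ei) a ⊓ (factorSub (a ∩ b))ᗮ ⟂ factorSub b := by
  refine isOrtho_iff_inner_eq.2 fun u ⟨hu, hu_perp⟩ v hv => ?_
  calc inner ℝ u v = inner ℝ (factorAvg a u) v := by rw [factorAvg_eq_self hu]
    _ = inner ℝ u (factorAvg a v) := isSymmetric_factorAvg a u v
    _ = 0 := inner_left_of_mem_orthogonal (factorAvg_mem_factorSub_inter a hv) hu_perp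

noncomputable def interactionSub (a : Set I) : Submodule ℝ (EuclideanSpace ℝ (∀ i, Ei i)) :=
  factorSub a ⊓ (⨆ (b : Set I) (_ : b ⊂ a), factorSub b)ᗮ

lemma interactionSub_le_factorSub (a : Set I) :
    interactionSub (Ei := Ei) a ≤ factorSub a :=
  inf_le_left

lemma isOrtho_interactionSub_factorSub {a b : Set I} (hab : ¬ a ⊆ b) :
    interactionSub (Ei := Ei) a ⟂ factorSub b := by
  refine (isOrtho_factorSub_inf_orthogonal a b).mono_left (inf_le_inf_left _ (orthogonal_le ?_))
  exact le_iSup₂_of_le (f := fun c (_ : c ⊂ a) => factorSub (Ei := Ei) c) (a ∩ b)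
    (Set.inter_ssubset_left_iff.2 hab) le_rfl

lemma isOrtho_interactionSub {a b : Set I} (hab : a ≠ b) :
    interactionSub (Ei := Ei) a ⟂ interactionSub b := by
  by_cases h : a ⊆ b
  · exact ((isOrtho_interactionSub_factorSub fun h' => hab (h.antisymm h')).mono_right
      (interactionSub_le_factorSub a)).symm
  · exact (isOrtho_interactionSub_factorSub h).mono_right (interactionSub_le_factorSub b)

lemma factorSub_eq_iSup_interactionSub (a : Set I) :
    factorSub (Ei := Ei) a = ⨆ (b : Set I) (_ : b ⊆ a), interactionSub b := by
  refine le_antisymm ?_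
    (iSup₂_le fun b hb => (interactionSub_le_factorSub b).trans (factorSub_mono hb))
  induction a using WellFoundedLT.induction with
  | _ a ih =>
    have hK : ⨆ (b : Set I) (_ : b ⊂ a), factorSub b ≤ factorSub (Ei := Ei) a :=
      iSup₂_le fun b hb => factorSub_mono hb.subset
    rw [← sup_orthogonal_inf_of_hasOrthogonalProjection hK, inf_comm]
    refine sup_le (iSup₂_le fun b hb => (ih b hb).trans ?_) (le_iSup₂_of_le a subset_rfl le_rfl)
    exact iSup₂_mono' fun c hc => ⟨c, hc.trans hb.subset, le_rfl⟩

/-- **decomposition into interaction subspaces.** There is a family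
`(S_a)_{a ⊆ I}` of pairwise orthogonal subspaces of `ℝ^E` with `ℝ^E = ⊕_{a ⊆ I} S_a`
such that every hierarchical model subspace `H_𝒜 = Σ_{a ∈ 𝒜} V_a` over a lower set `𝒜`
satisfies `H_𝒜 = ⊕_{a ∈ 𝒜} S_a`. -/
theorem exists_interaction_decomposition :
    ∃ S : Set I → Submodule ℝ (EuclideanSpace ℝ (∀ i, Ei i)),
      (∀ a b : Set I, a ≠ b → ∀ u ∈ S a, ∀ v ∈ S b, (inner ℝ u v : ℝ) = 0) ∧
      (⨆ a : Set I, S a) = ⊤ ∧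
      ∀ 𝒜 : Set (Set I), (∀ a ∈ 𝒜, ∀ b : Set I, b ⊆ a → b ∈ 𝒜) →
        (⨆ a ∈ 𝒜, (factorSub a : Submodule ℝ (EuclideanSpace ℝ (∀ i, Ei i)))) =
          ⨆ a ∈ 𝒜, S a := by
  refine ⟨interactionSub, fun a b hab => isOrtho_iff_inner_eq.1 (isOrtho_interactionSub hab),
    ?_, fun 𝒜 h𝒜 => le_antisymm ?_ (iSup₂_mono fun a _ => interactionSub_le_factorSub a)⟩
  · rw [eq_top_iff, ← factorSub_univ, factorSub_eq_iSup_interactionSub]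
    exact iSup₂_le fun b _ => le_iSup _ b
  · refine iSup₂_le fun a ha => (factorSub_eq_iSup_interactionSub a).le.trans ?_
    exact iSup₂_le fun b hb => le_iSup₂_of_le b (h𝒜 a ha b hb) le_rfl
end

section
/- Let E and F be Hilbert spaces over 𝕜 (𝕜 = ℝ or ℂ) and f : E → F a continuous linear map. Then f is an epimorphism in the category of Hilbert spaces and continuous linear maps — that is, for every Hilbert space G over 𝕜 and every pair of continuous linear maps g, h : F → G, g ∘ f = h ∘ f implies g = h — if and only if f has dense range. -/
/-!
If the range of `f` is not dense, its closure `K` is a proper closed subspace, and by Hahn–Banach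
some nonzero functional on `F ⧸ K` gives a nonzero `φ : F →L[𝕜] 𝕜` with `φ ∘ f = 0 = 0 ∘ f`.
The test space has to live in the arbitrary universe of `G`, so `φ` is composed with an
isometry onto a `Shrink` of `𝕜`. Conversely, continuous maps agreeing on a dense set are equal.
-/

universe u

open ContinuousLinearMap

namespace RCLike

instance small (𝕜 : Type*) [RCLike 𝕜] : Small.{u} 𝕜 :=
  small_of_injective (f := fun z : 𝕜 => (re z, im z)) fun _ _ h =>
    ext (congrArg Prod.fst h) (congrArg Prod.snd h)

end RCLike

noncomputable section

namespace Shrink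

variable (𝕜 E : Type*) [RCLike 𝕜] [NormedAddCommGroup E] [InnerProductSpace 𝕜 E] [Small.{u} E]

instance : InnerProductSpace 𝕜 (Shrink.{u} E) where
  inner x y := inner 𝕜 ((equivShrink E).symm x) ((equivShrink E).symm y)
  norm_sq_eq_re_inner x := norm_sq_eq_re_inner ((equivShrink E).symm x)
  conj_inner_symm _ _ := inner_conj_symm _ _
  add_left _ _ _ := by simp only [equivShrink_symm_add, inner_add_left]
  smul_left _ _ _ := by simp only [equivShrink_symm_smul, inner_smul_left]

def linearIsometryEquiv : Shrink.{u} E ≃ₗᵢ[𝕜] E :=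
  { Shrink.linearEquiv 𝕜 E with norm_map' := fun _ => rfl }

instance [CompleteSpace E] : CompleteSpace (Shrink.{u} E) :=
  (linearIsometryEquiv 𝕜 E).toIsometryEquiv.completeSpace

end Shrink

end

namespace ContinuousLinearMap

variable {𝕜 E F : Type*} [RCLike 𝕜] [AddCommGroup E] [Module 𝕜 E] [TopologicalSpace E]
  [NormedAddCommGroup F] [NormedSpace 𝕜 F]

theorem denseRange_of_forall_dual_comp_eq_zero (f : E →L[𝕜] F)
    (h : ∀ φ : StrongDual 𝕜 F, φ ∘L f = 0 → φ = 0) : DenseRange f := by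
  by_contra hf
  set K := (LinearMap.range (f : E →ₗ[𝕜] F)).topologicalClosure
  have hK : closure (Set.range f) = K :=
    (LinearMap.range (f : E →ₗ[𝕜] F)).topologicalClosure_coe.symm
  obtain ⟨x, hx⟩ : ∃ x, x ∉ K := by
    by_contra! hK_top
    exact hf (denseRange_iff_closure_range.2 (hK ▸ Set.eq_univ_of_forall hK_top))
  have : IsClosed (K : Set F) := hK ▸ isClosed_closure
  obtain ⟨ψ, hψ⟩ := SeparatingDual.exists_ne_zero (R := 𝕜) (x := K.mkQ x)
    (by rwa [Ne, Submodule.mkQ_apply, Submodule.Quotient.mk_eq_zero])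
  refine hψ (congr($(h (ψ ∘L K.mkQL) ?_) x))
  ext e
  have hfe : f e ∈ (K : Set F) := hK ▸ subset_closure ⟨e, rfl⟩
  simp [(Submodule.Quotient.mk_eq_zero K).2 hfe]

end ContinuousLinearMap

theorem hilbert_epi_iff_denseRange_general
    {𝕜 E F : Type*} [RCLike 𝕜]
    [NormedAddCommGroup E] [InnerProductSpace 𝕜 E]
    [NormedAddCommGroup F] [InnerProductSpace 𝕜 F]
    (f : E →L[𝕜] F) :
    (∀ (G : Type*) [NormedAddCommGroup G] [InnerProductSpace 𝕜 G] [CompleteSpace G]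
        (g h : F →L[𝕜] G), g.comp f = h.comp f → g = h) ↔ DenseRange f := by
  refine ⟨fun hepi => f.denseRange_of_forall_dual_comp_eq_zero fun φ hφ => ?_,
    fun hf G _ _ _ g h hgh => DFunLike.coe_injective <|
      hf.equalizer g.continuous h.continuous congr(⇑$hgh)⟩
  let e := (Shrink.linearIsometryEquiv 𝕜 𝕜).symm.toContinuousLinearEquiv
  have heφ : (e : 𝕜 →L[𝕜] Shrink 𝕜) ∘L φ = 0 :=
    hepi _ _ 0 (by rw [comp_assoc, hφ, comp_zero, zero_comp])
  ext x
  simpa using congr($heφ x)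

/-- A continuous linear map `f : E → F` between Hilbert spaces is an
epimorphism in the category of Hilbert spaces and continuous linear maps (i.e. it can be
cancelled on the right of continuous linear maps into any Hilbert space) if and only if
it has dense range. -/
theorem hilbert_epi_iff_denseRange
    {𝕜 E F : Type*} [RCLike 𝕜]
    [NormedAddCommGroup E] [InnerProductSpace 𝕜 E] [CompleteSpace E]
    [NormedAddCommGroup F] [InnerProductSpace 𝕜 F] [CompleteSpace F]
    (f : E →L[𝕜] F) :
    (∀ (G : Type*) [NormedAddCommGroup G] [InnerProductSpace 𝕜 G] [CompleteSpace G]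
        (g h : F →L[𝕜] G), g.comp f = h.comp f → g = h) ↔ DenseRange f :=
  hilbert_epi_iff_denseRange_general f
end

section
/- There is no coproduct of countably many copies of the ground field in the category of Hilbert spaces and continuous linear maps: there do not exist a Hilbert space C over 𝕜 (𝕜 = ℝ or ℂ) and a sequence of continuous linear maps (η_n : 𝕜 → C)_{n∈ℕ} such that for every Hilbert space W over 𝕜 and every sequence of continuous linear maps (φ_n : 𝕜 → W)_{n∈ℕ} there exists a continuous linear map φ : C → W with φ ∘ η_n = φ_n for all n ∈ ℕ. -/
/-!
If `ψ ∘ η n = φ n` for all `n`, then `‖φ n‖ ≤ ‖ψ‖ * ‖η n‖`, so a single bounded `ψ` cannot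
produce a family `φ` with `‖φ n‖ > n * ‖η n‖`; such a family exists in any nonzero Hilbert space,
e.g. `𝕜` itself.
-/

universe v

theorem ContinuousLinearMap.not_forall_exists_comp_eq {𝕜 C W : Type*} [NontriviallyNormedField 𝕜]
    [SeminormedAddCommGroup C] [NormedSpace 𝕜 C] [NormedAddCommGroup W] [NormedSpace 𝕜 W]
    [Nontrivial W] (η : ℕ → 𝕜 →L[𝕜] C) :
    ¬ ∀ φ : ℕ → 𝕜 →L[𝕜] W, ∃ ψ : C →L[𝕜] W, ∀ n, ψ.comp (η n) = φ n := by
  intro h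
  choose w hw using fun n : ℕ => NormedSpace.exists_lt_norm 𝕜 W (n * ‖η n‖)
  obtain ⟨ψ, hψ⟩ := h fun n => toSpanSingleton 𝕜 (w n)
  obtain ⟨n, hn⟩ := exists_nat_ge ‖ψ‖
  have : ‖w n‖ < ‖w n‖ := calc
    ‖w n‖ = ‖ψ.comp (η n)‖ := by rw [hψ n, norm_toSpanSingleton]
    _ ≤ ‖ψ‖ * ‖η n‖ := opNorm_comp_le ψ (η n)
    _ ≤ n * ‖η n‖ := by gcongr
    _ < ‖w n‖ := hw n
  exact this.false

/- The universal property quantifies over Hilbert spaces in an arbitrary universe, so the test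
space is the copy `Shrink.{v} 𝕜` of `𝕜`. -/

instance RCLike.small_s14 {𝕜 : Type*} [RCLike 𝕜] : Small.{v} 𝕜 :=
  small_of_injective (Module.finBasis ℝ 𝕜).equivFun.injective

noncomputable instance RCLike.innerProductSpaceShrink {𝕜 : Type*} [RCLike 𝕜] :
    InnerProductSpace 𝕜 (Shrink.{v} 𝕜) :=
  InnerProductSpace.ofNorm 𝕜 fun x y => by
    have := parallelogram_law_with_norm_mul 𝕜 (Shrink.linearEquiv 𝕜 𝕜 x) (Shrink.linearEquiv 𝕜 𝕜 y)
    rwa [← map_add, ← map_sub] at this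

theorem no_countable_coproduct_of_hilbert_general
    {𝕜 : Type*} [RCLike 𝕜]
    (C : Type*) [NormedAddCommGroup C] [InnerProductSpace 𝕜 C]
    (η : ℕ → (𝕜 →L[𝕜] C)) :
    ¬ (∀ (W : Type*) [NormedAddCommGroup W] [InnerProductSpace 𝕜 W] [CompleteSpace W]
        (φ : ℕ → (𝕜 →L[𝕜] W)), ∃ ψ : C →L[𝕜] W, ∀ n, ψ.comp (η n) = φ n) :=
  fun h => ContinuousLinearMap.not_forall_exists_comp_eq (W := Shrink 𝕜) η (h (Shrink 𝕜))

/-- There is no coproduct of countably many copies of the ground field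
`𝕜` in the category of Hilbert spaces and continuous linear maps: no Hilbert space `C`
with structure maps `η_n : 𝕜 → C` satisfies the (existence part of the) universal
property of the coproduct. -/
theorem no_countable_coproduct_of_hilbert
    {𝕜 : Type*} [RCLike 𝕜]
    (C : Type*) [NormedAddCommGroup C] [InnerProductSpace 𝕜 C] [CompleteSpace C]
    (η : ℕ → (𝕜 →L[𝕜] C)) :
    ¬ (∀ (W : Type*) [NormedAddCommGroup W] [InnerProductSpace 𝕜 W] [CompleteSpace W]
        (φ : ℕ → (𝕜 →L[𝕜] W)), ∃ ψ : C →L[𝕜] W, ∀ n, ψ.comp (η n) = φ n) :=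
  no_countable_coproduct_of_hilbert_general C η
end

section
/- Let H be a Hilbert space over 𝕜 (𝕜 = ℝ or ℂ) and let ℓ²(ℕ, H) be the Hilbert space of square-summable H-valued sequences. Let D be the linear span of the set of all elements of the form (single n v) − (single (n+1) v) for n ∈ ℕ and v ∈ H, where single n v denotes the sequence equal to v in coordinate n and 0 elsewhere. Then the orthogonal complement of D in ℓ²(ℕ, H) is the zero subspace; equivalently, D is dense in ℓ²(ℕ, H). -/
/-!
A vector orthogonal to every `single n v - single (n+1) v` has equal consecutive coordinates,
so it is a constant sequence, and the only constant sequence in `ℓ²` over an infinite index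
type is `0`. Density then follows since `ℓ²(ℕ, H)` is complete.
-/

open Submodule

open scoped ENNReal InnerProductSpace

theorem memℓp_const_iff {ι E : Type*} [Infinite ι] [NormedAddCommGroup E] {p : ℝ≥0∞}
    (hp : p ≠ ∞) {a : E} : Memℓp (fun _ : ι => a) p ↔ a = 0 := by
  refine ⟨fun ha => ?_, fun ha => ha ▸ zero_memℓp⟩
  by_contra ha_ne
  rcases eq_zero_or_pos p with rfl | hp_pos
  · exact Set.infinite_univ (by simpa [ha_ne] using memℓp_zero_iff.1 ha)
  · have hp_real : 0 < p.toReal := ENNReal.toReal_pos hp_pos.ne' hp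
    have := summable_const_iff (β := ι) _ |>.1 ((memℓp_gen_iff hp_real).1 ha)
    exact ha_ne (norm_eq_zero.1 (Real.rpow_eq_zero (norm_nonneg a) hp_real.ne' |>.1 this))

theorem Submodule.dense_iff_orthogonal_eq_bot {𝕜 E : Type*} [RCLike 𝕜] [NormedAddCommGroup E]
    [InnerProductSpace 𝕜 E] [CompleteSpace E] (K : Submodule 𝕜 E) :
    Dense (K : Set E) ↔ Kᗮ = ⊥ := by
  rw [dense_iff_topologicalClosure_eq_top, topologicalClosure_eq_top_iff]

namespace lp

variable {ι 𝕜 H : Type*} [RCLike 𝕜] [NormedAddCommGroup H] [InnerProductSpace 𝕜 H]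

theorem apply_eq_apply_of_forall_inner_single_sub_single [DecidableEq ι]
    (y : lp (fun _ : ι => H) 2) (i j : ι)
    (hy : ∀ v : H, ⟪lp.single 2 i v - lp.single 2 j v, y⟫_𝕜 = 0) : y i = y j := by
  have h := hy (y i - y j)
  rwa [inner_sub_left, inner_single_left, inner_single_left, ← inner_sub_right,
    inner_self_eq_zero, sub_eq_zero] at h

theorem eq_zero_of_forall_apply_eq [Infinite ι] {p : ℝ≥0∞} (hp : p ≠ ∞)
    (y : lp (fun _ : ι => H) p) (i₀ : ι) (hy : ∀ i, y i = y i₀) : y = 0 := by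
  have hmem : Memℓp (fun _ : ι => y i₀) p := by simpa only [← funext hy] using lp.memℓp y
  ext i
  rw [hy i, (memℓp_const_iff hp).1 hmem]
  rfl

end lp

/-- In `ℓ²(ℕ, H)`, the span `D` of the elements
`single n v − single (n+1) v` (`n ∈ ℕ`, `v ∈ H`) has trivial orthogonal complement;
equivalently, `D` is dense in `ℓ²(ℕ, H)`. -/
theorem kernel_span_dense_in_l2
    {𝕜 H : Type*} [RCLike 𝕜] [NormedAddCommGroup H] [InnerProductSpace 𝕜 H]
    [CompleteSpace H] :
    (Submodule.span 𝕜 {x : lp (fun _ : ℕ => H) 2 |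
        ∃ n : ℕ, ∃ v : H, x = lp.single 2 n v - lp.single 2 (n + 1) v})ᗮ = ⊥ ∧
    Dense ((Submodule.span 𝕜 {x : lp (fun _ : ℕ => H) 2 |
        ∃ n : ℕ, ∃ v : H, x = lp.single 2 n v - lp.single 2 (n + 1) v} :
          Submodule 𝕜 (lp (fun _ : ℕ => H) 2)) : Set (lp (fun _ : ℕ => H) 2)) := by
  set D := Submodule.span 𝕜 {x : lp (fun _ : ℕ => H) 2 |
    ∃ n : ℕ, ∃ v : H, x = lp.single 2 n v - lp.single 2 (n + 1) v}
  have hD : Dᗮ = ⊥ := by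
    refine (Submodule.eq_bot_iff _).2 fun y hy => ?_
    have hstep (n : ℕ) : y n = y (n + 1) :=
      lp.apply_eq_apply_of_forall_inner_single_sub_single (𝕜 := 𝕜) y n (n + 1) fun v =>
        (mem_orthogonal D y).1 hy _ (subset_span ⟨n, v, rfl⟩)
    have hconst (n : ℕ) : y n = y 0 := by
      induction n with
      | zero => rfl
      | succ k ih => rw [← hstep k, ih]
    exact lp.eq_zero_of_forall_apply_eq (by norm_num) y 0 hconst
  exact ⟨hD, D.dense_iff_orthogonal_eq_bot.2 hD⟩
end

section
/- Let E be an inner product space and K a closed linear subspace of E. Then the quotient seminormed space E/K, with the quotient norm ‖[v]‖ = inf_{u∈K} ‖v − u‖, is a normed space whose norm satisfies the parallelogram identity: for all x, y ∈ E/K, ‖x + y‖² + ‖x − y‖² = 2‖x‖² + 2‖y‖². Consequently E/K is a pre-Hilbert space, and the quotient map E → E/K is continuous. -/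
/-!
Since `K` need not be complete there is no orthogonal projection onto it, so we approximate.
Choose representatives `a`, `b` of `x`, `y` whose norms are within `ε` of the quotient norms.
Since the quotient map does not increase norms, the parallelogram law in `E` gives
`‖x + y‖² + ‖x - y‖² ≤ 2 (‖a‖² + ‖b‖²)`, and letting `ε → 0` yields the parallelogram
inequality in `E ⧸ K`. Applied to `x + y` and `x - y`, the same inequality gives the reverse bound.
-/

open Filter Topology

theorem QuotientAddGroup.norm_mk_eq_sInf {M : Type*} [SeminormedAddCommGroup M]
    (S : AddSubgroup M) (m : M) :
    ‖(m : M ⧸ S)‖ = sInf ((fun s => ‖m - s‖) '' (S : Set M)) := by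
  rw [QuotientAddGroup.norm_mk, Metric.infDist_eq_iInf, sInf_image']
  simp only [dist_eq_norm]

theorem QuotientAddGroup.norm_add_sq_add_norm_sub_sq_le {M : Type*} [SeminormedAddCommGroup M]
    (hM : ∀ a b : M, ‖a + b‖ ^ 2 + ‖a - b‖ ^ 2 = 2 * (‖a‖ ^ 2 + ‖b‖ ^ 2))
    (S : AddSubgroup M) (x y : M ⧸ S) :
    ‖x + y‖ ^ 2 + ‖x - y‖ ^ 2 ≤ 2 * (‖x‖ ^ 2 + ‖y‖ ^ 2) := by
  have hlim : Tendsto (fun ε : ℝ => 2 * ((‖x‖ + ε) ^ 2 + (‖y‖ + ε) ^ 2)) (𝓝[>] 0)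
      (𝓝 (2 * (‖x‖ ^ 2 + ‖y‖ ^ 2))) :=
    tendsto_nhdsWithin_of_tendsto_nhds <| Continuous.tendsto' (by fun_prop) 0 _ (by simp)
  refine ge_of_tendsto hlim (eventually_nhdsWithin_of_forall fun ε (hε : 0 < ε) => ?_)
  obtain ⟨a, rfl, ha⟩ := QuotientAddGroup.exists_norm_mk_lt x hε
  obtain ⟨b, rfl, hb⟩ := QuotientAddGroup.exists_norm_mk_lt y hε
  calc ‖(a : M ⧸ S) + b‖ ^ 2 + ‖(a : M ⧸ S) - b‖ ^ 2 ≤ ‖a + b‖ ^ 2 + ‖a - b‖ ^ 2 := by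
        rw [← QuotientAddGroup.mk_add, ← QuotientAddGroup.mk_sub]
        gcongr <;> exact QuotientAddGroup.norm_mk_le_norm
    _ = 2 * (‖a‖ ^ 2 + ‖b‖ ^ 2) := hM a b
    _ ≤ 2 * ((‖(a : M ⧸ S)‖ + ε) ^ 2 + (‖(b : M ⧸ S)‖ + ε) ^ 2) := by gcongr

theorem parallelogram_law_of_le {𝕜 F : Type*} [RCLike 𝕜] [SeminormedAddCommGroup F]
    [NormedSpace 𝕜 F]
    (hF : ∀ x y : F, ‖x + y‖ ^ 2 + ‖x - y‖ ^ 2 ≤ 2 * (‖x‖ ^ 2 + ‖y‖ ^ 2)) (x y : F) :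
    ‖x + y‖ ^ 2 + ‖x - y‖ ^ 2 = 2 * (‖x‖ ^ 2 + ‖y‖ ^ 2) := by
  have norm_two_smul (z : F) : ‖(2 : 𝕜) • z‖ = 2 * ‖z‖ := by simp [norm_smul]
  have hrev := hF (x + y) (x - y)
  rw [show x + y + (x - y) = (2 : 𝕜) • x by rw [two_smul]; abel,
    show x + y - (x - y) = (2 : 𝕜) • y by rw [two_smul]; abel,
    norm_two_smul, norm_two_smul] at hrev
  linarith [hF x y]

/-- For a closed subspace `K` of a (not necessarily complete) inner
product space `E`, the quotient `E ⧸ K` with the quotient norm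
`‖[v]‖ = inf_{u ∈ K} ‖v − u‖` is a normed space (the quotient seminorm is definite)
satisfying the parallelogram identity — hence `E ⧸ K` is a pre-Hilbert space — and the
quotient map `E → E ⧸ K` is continuous. -/
theorem quotient_preHilbert
    {𝕜 E : Type*} [RCLike 𝕜] [NormedAddCommGroup E] [InnerProductSpace 𝕜 E]
    (K : Submodule 𝕜 E) (hK : IsClosed (K : Set E)) :
    (∀ v : E, ‖K.mkQ v‖ = sInf ((fun u => ‖v - u‖) '' (K : Set E))) ∧
    (∀ x : E ⧸ K, ‖x‖ = 0 → x = 0) ∧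
    (∀ x y : E ⧸ K, ‖x + y‖ ^ 2 + ‖x - y‖ ^ 2 = 2 * ‖x‖ ^ 2 + 2 * ‖y‖ ^ 2) ∧
    Continuous K.mkQ := by
  have parallelogram (x y : E ⧸ K) : ‖x + y‖ ^ 2 + ‖x - y‖ ^ 2 = 2 * (‖x‖ ^ 2 + ‖y‖ ^ 2) :=
    parallelogram_law_of_le (𝕜 := 𝕜) (F := E ⧸ K)
      (QuotientAddGroup.norm_add_sq_add_norm_sub_sq_le (parallelogram_law_with_norm 𝕜) _) x y
  have : IsClosed (K : Set E) := hK
  exact ⟨QuotientAddGroup.norm_mk_eq_sInf K.toAddSubgroup, fun _ => norm_eq_zero.mp,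
    fun x y => (parallelogram x y).trans (mul_add _ _ _), continuous_quot_mk⟩
end

section
/- Let E be an inner product space over ℝ, K a linear subspace of E, x, y ∈ E, and ε > 0. Then there exist u, v ∈ K such that ‖x − u‖ ≤ inf_{w∈K} ‖x − w‖ + ε, ‖y − v‖ ≤ inf_{w∈K} ‖y − w‖ + ε, and ‖(x + y) − (u + v)‖ ≤ inf_{w∈K} ‖(x + y) − w‖ + ε. -/
/-! The orthogonal projection `P` onto the closure of `K` in the completion of `E` is linear and
realizes the distance to `K`. Approximating `P x` and `P y` within `ε / 2` by `u, v ∈ K` gives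
near-minimizers for `x` and `y`, and by linearity `u + v` approximates `P (x + y)` within `ε`. -/

open Metric UniformSpace

section NearMinimizers

variable {E F : Type*} [NormedAddCommGroup E] [InnerProductSpace ℝ E]
  [NormedAddCommGroup F] [InnerProductSpace ℝ F]

theorem Submodule.infDist_eq_norm_sub_starProjection (U : Submodule ℝ F)
    [U.HasOrthogonalProjection] (z : F) :
    infDist z (U : Set F) = ‖z - U.starProjection z‖ := by
  rw [starProjection_minimal, infDist_eq_iInf]
  simp only [dist_eq_norm]
  rfl

theorem LinearIsometry.infDist_map_topologicalClosure (ι : E →ₗᵢ[ℝ] F) (K : Submodule ℝ E)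
    (z : E) :
    infDist (ι z) ((K.map ι.toLinearMap).topologicalClosure : Set F) =
      infDist z (K : Set E) := by
  rw [Submodule.topologicalClosure_coe, infDist_closure, Submodule.map_coe]
  exact infDist_image ι.isometry

theorem LinearIsometry.exists_norm_sub_lt_of_mem_topologicalClosure (ι : E →ₗᵢ[ℝ] F)
    {K : Submodule ℝ E} {p : F} (hp : p ∈ (K.map ι.toLinearMap).topologicalClosure)
    {δ : ℝ} (hδ : 0 < δ) : ∃ w ∈ K, ‖p - ι w‖ < δ := by
  rw [← SetLike.mem_coe, Submodule.topologicalClosure_coe, Submodule.map_coe] at hp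
  obtain ⟨_, ⟨w, hw, rfl⟩, hpw⟩ := mem_closure_iff.1 hp δ hδ
  exact ⟨w, hw, by rwa [dist_eq_norm] at hpw⟩

theorem LinearIsometry.norm_sub_le_infDist_add [CompleteSpace F] (ι : E →ₗᵢ[ℝ] F)
    (K : Submodule ℝ E) (z : E) {w : E} :
    ‖z - w‖ ≤ infDist z (K : Set E) +
      ‖(K.map ι.toLinearMap).topologicalClosure.starProjection (ι z) - ι w‖ := by
  set L := (K.map ι.toLinearMap).topologicalClosure
  rw [← ι.infDist_map_topologicalClosure K z, L.infDist_eq_norm_sub_starProjection,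
    ← ι.norm_map, map_sub]
  exact norm_sub_le_norm_sub_add_norm_sub _ _ _

end NearMinimizers

/-- In a real inner product space `E` with a subspace `K`, given
`x, y ∈ E` and `ε > 0`, one can choose near-minimizers `u, v ∈ K` of the distances from
`x` and from `y` to `K` such that `u + v` is a near-minimizer of the distance from
`x + y` to `K`. -/
theorem exists_near_minimizers_add
    {E : Type*} [NormedAddCommGroup E] [InnerProductSpace ℝ E]
    (K : Submodule ℝ E) (x y : E) (ε : ℝ) (hε : 0 < ε) :
    ∃ u ∈ K, ∃ v ∈ K,
      ‖x - u‖ ≤ Metric.infDist x (K : Set E) + ε ∧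
      ‖y - v‖ ≤ Metric.infDist y (K : Set E) + ε ∧
      ‖x + y - (u + v)‖ ≤ Metric.infDist (x + y) (K : Set E) + ε := by
  set ι := Completion.toComplₗᵢ (𝕜 := ℝ) (E := E)
  set P := (K.map ι.toLinearMap).topologicalClosure.starProjection
  obtain ⟨u, hu, hxu⟩ :=
    ι.exists_norm_sub_lt_of_mem_topologicalClosure (K := K) (Submodule.starProjection_apply_mem _ (ι x))
      (half_pos hε)
  obtain ⟨v, hv, hyv⟩ :=
    ι.exists_norm_sub_lt_of_mem_topologicalClosure (K := K) (Submodule.starProjection_apply_mem _ (ι y))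
      (half_pos hε)
  have hsum : ‖P (ι (x + y)) - ι (u + v)‖ < ε := by
    have : P (ι (x + y)) - ι (u + v) = (P (ι x) - ι u) + (P (ι y) - ι v) := by
      simp only [map_add]; abel
    rw [this]
    linarith [norm_add_le (P (ι x) - ι u) (P (ι y) - ι v)]
  refine ⟨u, hu, v, hv, ?_, ?_, ?_⟩
  · linarith [ι.norm_sub_le_infDist_add K x (w := u)]
  · linarith [ι.norm_sub_le_infDist_add K y (w := v)]
  · linarith [ι.norm_sub_le_infDist_add K (x + y) (w := u + v)]
end
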